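/- arXiv:1902.04221 — 2 statements merged into one kernel-verified Lean document; each statement's English description precedes it below -/
import Mathlib

section
/- Let H : ℝ³ × ℝ × ℝ³ → ℝ, (p,ρ,g) ↦ H(p,ρ,g), be smooth, and let p : ℝ³ → ℝ³ and ρ : ℝ³ → ℝ be smooth fields. Then, with all derivatives of H evaluated at (p(x), ρ(x), ∇ρ(x)), the following identity holds at every x ∈ ℝ³: ∇(H(p(x),ρ(x),∇ρ(x))) = ∇·( (∂H/∂g) ⊗ ∇ρ + [ p·(∂H/∂p) + ρ (∂H/∂ρ) − ρ ∇·(∂H/∂g) ] 𝕀 ) − (∇(∂H/∂p))·p − ρ ∇( ∂H/∂ρ − ∇·(∂H/∂g) ). -/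
/-!
Statement 5: A differential identity for the composite field `x ↦ H(p(x), ρ(x), ∇ρ(x))`:
`∇H = ∇·( (∂H/∂g) ⊗ ∇ρ + [p·∂H/∂p + ρ ∂H/∂ρ − ρ ∇·(∂H/∂g)] 𝕀 )
      − (∇(∂H/∂p))·p − ρ ∇(∂H/∂ρ − ∇·(∂H/∂g))`.
-/

noncomputable section

abbrev V3 : Type := Fin 3 → ℝ

/-- Partial derivative `∂_j` of a scalar field on `ℝ³`. -/
def pd3 (f : V3 → ℝ) (j : Fin 3) (x : V3) : ℝ := fderiv ℝ f x (Pi.single j 1)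

/-- Gradient of a scalar field on `ℝ³`. -/
def grad3 (f : V3 → ℝ) (x : V3) : V3 := fun i => pd3 f i x

/-- Divergence of a vector field on `ℝ³`. -/
def div3 (w : V3 → V3) (x : V3) : ℝ := ∑ i, pd3 (fun x' => w x' i) i x

/-- Divergence of a matrix field on `ℝ³`, `(∇·T)_j = Σ_i ∂_i T_{ij}`. -/
def divMat3 (T : V3 → Fin 3 → Fin 3 → ℝ) (x : V3) (j : Fin 3) : ℝ :=
  ∑ i, pd3 (fun x' => T x' i j) i x

/-- `∂H/∂p`. -/
def dHdp (H : V3 × ℝ × V3 → ℝ) (q : V3 × ℝ × V3) : V3 :=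
  fun i => fderiv ℝ H q (Pi.single i 1, 0, 0)

/-- `∂H/∂ρ`. -/
def dHdrho (H : V3 × ℝ × V3 → ℝ) (q : V3 × ℝ × V3) : ℝ :=
  fderiv ℝ H q (0, 1, 0)

/-- `∂H/∂g`. -/
def dHdg (H : V3 × ℝ × V3 → ℝ) (q : V3 × ℝ × V3) : V3 :=
  fun i => fderiv ℝ H q (0, 0, Pi.single i 1)

lemma contDiff_pd3 {f : V3 → ℝ} (hf : ContDiff ℝ (⊤ : ℕ∞) f) (i : Fin 3) :
    ContDiff ℝ (⊤ : ℕ∞) (fun x => pd3 f i x) :=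
  (ContinuousLinearMap.apply ℝ ℝ (Pi.single i 1 : V3)).contDiff.comp (hf.fderiv_right (by simp))


lemma contDiff_grad3 {f : V3 → ℝ} (hf : ContDiff ℝ (⊤ : ℕ∞) f) : ContDiff ℝ (⊤ : ℕ∞) (grad3 f) :=
  contDiff_pi.2 fun i => contDiff_pd3 hf i


lemma pd3_add {f g : V3 → ℝ} {x : V3} (hf : DifferentiableAt ℝ f x)
    (hg : DifferentiableAt ℝ g x) (j : Fin 3) :
    pd3 (fun x' => f x' + g x') j x = pd3 f j x + pd3 g j x := by
  unfold pd3; rw [fderiv_fun_add hf hg]; rfl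


lemma pd3_sub {f g : V3 → ℝ} {x : V3} (hf : DifferentiableAt ℝ f x)
    (hg : DifferentiableAt ℝ g x) (j : Fin 3) :
    pd3 (fun x' => f x' - g x') j x = pd3 f j x - pd3 g j x := by
  unfold pd3; rw [fderiv_fun_sub hf hg]; rfl


lemma pd3_mul {f g : V3 → ℝ} {x : V3} (hf : DifferentiableAt ℝ f x)
    (hg : DifferentiableAt ℝ g x) (j : Fin 3) :
    pd3 (fun x' => f x' * g x') j x = pd3 f j x * g x + f x * pd3 g j x := by
  unfold pd3; rw [fderiv_fun_mul hf hg]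
  simp only [ContinuousLinearMap.add_apply, ContinuousLinearMap.smul_apply, smul_eq_mul]
  ring


lemma pd3_mul_const {f : V3 → ℝ} {x : V3} (hf : DifferentiableAt ℝ f x) (c : ℝ) (j : Fin 3) :
    pd3 (fun x' => f x' * c) j x = pd3 f j x * c := by
  unfold pd3; rw [fderiv_mul_const hf]
  simp [mul_comm]


lemma pd3_sum {ι : Type*} {s : Finset ι} {f : ι → V3 → ℝ} {x : V3}
    (hf : ∀ a ∈ s, DifferentiableAt ℝ (f a) x) (j : Fin 3) :
    pd3 (fun x' => ∑ a ∈ s, f a x') j x = ∑ a ∈ s, pd3 (f a) j x := by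
  unfold pd3; rw [fderiv_fun_sum hf]; simp


lemma pd3_comp_apply {w : V3 → V3} {x : V3} (hw : DifferentiableAt ℝ w x) (a j : Fin 3) :
    pd3 (fun x' => w x' a) j x = fderiv ℝ w x (Pi.single j 1) a := by
  unfold pd3
  rw [show (fun x' => w x' a) = (ContinuousLinearMap.proj a : V3 →L[ℝ] ℝ) ∘ w from rfl,
    fderiv_comp x (ContinuousLinearMap.differentiableAt _) hw, ContinuousLinearMap.fderiv]
  rfl


lemma pd3_grad3_symm {ρ : V3 → ℝ} (hρ : ContDiff ℝ (⊤ : ℕ∞) ρ) (x : V3) (i k : Fin 3) :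
    pd3 (fun x' => grad3 ρ x' k) i x = pd3 (fun x' => grad3 ρ x' i) k x := by
  have hf' : ∀ y, HasFDerivAt ρ (fderiv ℝ ρ y) y :=
    fun y => (hρ.differentiable (by simp) y).hasFDerivAt
  have hdf : Differentiable ℝ (fderiv ℝ ρ) := (hρ.fderiv_right (m := (⊤ : ℕ∞)) (by simp)).differentiable (by simp)
  have hf'' : HasFDerivAt (fderiv ℝ ρ) (fderiv ℝ (fderiv ℝ ρ) x) x := (hdf x).hasFDerivAt
  have key := second_derivative_symmetric hf' hf''
  have hrep : ∀ a b : Fin 3, pd3 (fun x' => grad3 ρ x' a) b x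
      = fderiv ℝ (fderiv ℝ ρ) x (Pi.single b 1) (Pi.single a 1) := by
    intro a b
    have : (fun x' => grad3 ρ x' a) = fun x' => (fderiv ℝ ρ x') ((fun _ => (Pi.single a 1 : V3)) x') := rfl
    unfold pd3
    rw [this, fderiv_clm_apply (hdf x) (differentiableAt_const _)]
    simp
  rw [hrep, hrep, key]


lemma clm_decomp (L : (V3 × ℝ × V3) →L[ℝ] ℝ) (v : V3 × ℝ × V3) :
    L v = (∑ a, v.1 a * L (Pi.single a 1, 0, 0)) + v.2.1 * L (0, 1, 0)
      + ∑ k, v.2.2 k * L (0, 0, Pi.single k 1) := by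
  have hv : v = (∑ a, v.1 a • ((Pi.single a 1 : V3), (0:ℝ), (0:V3)))
      + v.2.1 • ((0:V3), (1:ℝ), (0:V3))
      + ∑ k, v.2.2 k • ((0:V3), (0:ℝ), (Pi.single k 1 : V3)) := by
    refine Prod.ext ?_ (Prod.ext ?_ ?_) <;>
      simp [Prod.fst_sum, Prod.snd_sum, Finset.sum_apply, Pi.single_apply] <;>
      funext i <;>
      simp [Finset.sum_apply, Pi.single_apply, mul_ite]
  conv_lhs => rw [hv]
  simp only [map_add, map_sum, map_smul, smul_eq_mul]


lemma contDiff_fderiv_comp {H : V3 × ℝ × V3 → ℝ} (hH : ContDiff ℝ (⊤ : ℕ∞) H)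
    {q : V3 → V3 × ℝ × V3} (hq : ContDiff ℝ (⊤ : ℕ∞) q) (v : V3 × ℝ × V3) :
    ContDiff ℝ (⊤ : ℕ∞) (fun x => fderiv ℝ H (q x) v) :=
  (ContinuousLinearMap.apply ℝ ℝ v).contDiff.comp ((hH.fderiv_right (by simp)).comp hq)


lemma chain_rule (H : V3 × ℝ × V3 → ℝ) (hH : ContDiff ℝ (⊤ : ℕ∞) H)
    (p : V3 → V3) (ρ : V3 → ℝ) (hp : ContDiff ℝ (⊤ : ℕ∞) p) (hρ : ContDiff ℝ (⊤ : ℕ∞) ρ)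
    (x : V3) (j : Fin 3) :
    pd3 (fun x' => H (p x', ρ x', grad3 ρ x')) j x =
      (∑ a, pd3 (fun x' => p x' a) j x * dHdp H (p x, ρ x, grad3 ρ x) a)
      + pd3 ρ j x * dHdrho H (p x, ρ x, grad3 ρ x)
      + ∑ k, pd3 (fun x' => grad3 ρ x' k) j x * dHdg H (p x, ρ x, grad3 ρ x) k := by
  have hg := contDiff_grad3 hρ
  have hq : ContDiff ℝ (⊤ : ℕ∞) (fun x' => (p x', ρ x', grad3 ρ x')) :=
    hp.prodMk (hρ.prodMk hg)
  have hqx : DifferentiableAt ℝ (fun x' => (p x', ρ x', grad3 ρ x')) x :=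
    (hq.differentiable (by simp)) x
  have hpx : DifferentiableAt ℝ p x := (hp.differentiable (by simp)) x
  have hρx : DifferentiableAt ℝ ρ x := (hρ.differentiable (by simp)) x
  have hgx : DifferentiableAt ℝ (grad3 ρ) x := (hg.differentiable (by simp)) x
  have hHx : DifferentiableAt ℝ H (p x, ρ x, grad3 ρ x) := (hH.differentiable (by simp)) _
  have hcomp : pd3 (fun x' => H (p x', ρ x', grad3 ρ x')) j x
      = fderiv ℝ H (p x, ρ x, grad3 ρ x)
          (fderiv ℝ (fun x' => (p x', ρ x', grad3 ρ x')) x (Pi.single j 1)) := by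
    unfold pd3
    rw [show (fun x' => H (p x', ρ x', grad3 ρ x'))
        = H ∘ (fun x' => (p x', ρ x', grad3 ρ x')) from rfl,
      fderiv_comp x hHx hqx]
    rfl
  have hqd : fderiv ℝ (fun x' => (p x', ρ x', grad3 ρ x')) x (Pi.single j 1)
      = (fderiv ℝ p x (Pi.single j 1), fderiv ℝ ρ x (Pi.single j 1),
          fderiv ℝ (grad3 ρ) x (Pi.single j 1)) := by
    rw [DifferentiableAt.fderiv_prodMk hpx (hρx.prodMk hgx),
      DifferentiableAt.fderiv_prodMk hρx hgx]
    rfl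
  rw [hcomp, hqd, clm_decomp]
  have e1 := fun a => pd3_comp_apply hpx a j
  have e2 := fun k => pd3_comp_apply hgx k j
  simp only [e1, e2]
  simp only [dHdp, dHdrho, dHdg, pd3]


theorem hamiltonian_gradient_identity (H : V3 × ℝ × V3 → ℝ) (hH : ContDiff ℝ (⊤ : ℕ∞) H)
    (p : V3 → V3) (ρ : V3 → ℝ) (hp : ContDiff ℝ (⊤ : ℕ∞) p) (hρ : ContDiff ℝ (⊤ : ℕ∞) ρ) :
    ∀ (x : V3) (j : Fin 3),
      pd3 (fun x' => H (p x', ρ x', grad3 ρ x')) j x =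
        divMat3 (fun x' => fun i j' =>
            dHdg H (p x', ρ x', grad3 ρ x') i * grad3 ρ x' j'
            + ((∑ k, p x' k * dHdp H (p x', ρ x', grad3 ρ x') k)
                + ρ x' * dHdrho H (p x', ρ x', grad3 ρ x')
                - ρ x' * div3 (fun x'' => dHdg H (p x'', ρ x'', grad3 ρ x'')) x')
              * (if i = j' then 1 else 0)) x j
        - (∑ a, pd3 (fun x' => dHdp H (p x', ρ x', grad3 ρ x') a) j x * p x a)
        - ρ x * pd3 (fun x' =>
            dHdrho H (p x', ρ x', grad3 ρ x')
              - div3 (fun x'' => dHdg H (p x'', ρ x'', grad3 ρ x'')) x') j x := by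
  intro x j
  have hg3 : ContDiff ℝ (⊤ : ℕ∞) (grad3 ρ) := contDiff_grad3 hρ
  have hq : ContDiff ℝ (⊤ : ℕ∞) (fun x' => (p x', ρ x', grad3 ρ x')) := hp.prodMk (hρ.prodMk hg3)
  have hG : ∀ i : Fin 3, ContDiff ℝ (⊤ : ℕ∞) (fun x' => dHdg H (p x', ρ x', grad3 ρ x') i) :=
    fun i => contDiff_fderiv_comp hH hq (0, 0, Pi.single i 1)
  have hHP : ∀ a : Fin 3, ContDiff ℝ (⊤ : ℕ∞) (fun x' => dHdp H (p x', ρ x', grad3 ρ x') a) :=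
    fun a => contDiff_fderiv_comp hH hq (Pi.single a 1, 0, 0)
  have hHR : ContDiff ℝ (⊤ : ℕ∞) (fun x' => dHdrho H (p x', ρ x', grad3 ρ x')) :=
    contDiff_fderiv_comp hH hq (0, 1, 0)
  have hgr : ∀ k : Fin 3, ContDiff ℝ (⊤ : ℕ∞) (fun x' => grad3 ρ x' k) :=
    fun k => (ContinuousLinearMap.proj k : V3 →L[ℝ] ℝ).contDiff.comp hg3
  have hPa : ∀ a : Fin 3, ContDiff ℝ (⊤ : ℕ∞) (fun x' => p x' a) :=
    fun a => (ContinuousLinearMap.proj a : V3 →L[ℝ] ℝ).contDiff.comp hp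
  have hD : ContDiff ℝ (⊤ : ℕ∞) (fun x' => div3 (fun x'' => dHdg H (p x'', ρ x'', grad3 ρ x'')) x') := by
    have e : (fun x' => div3 (fun x'' => dHdg H (p x'', ρ x'', grad3 ρ x'')) x')
        = fun x' => ∑ i, pd3 (fun x'' => dHdg H (p x'', ρ x'', grad3 ρ x'') i) i x' := rfl
    rw [e]
    exact ContDiff.sum fun i _ => contDiff_pd3 (hG i) i
  have hS : ContDiff ℝ (⊤ : ℕ∞) (fun x' =>
      (∑ k, p x' k * dHdp H (p x', ρ x', grad3 ρ x') k)
        + ρ x' * dHdrho H (p x', ρ x', grad3 ρ x')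
        - ρ x' * div3 (fun x'' => dHdg H (p x'', ρ x'', grad3 ρ x'')) x') :=
    ((ContDiff.sum fun k _ => (hPa k).mul (hHP k)).add (hρ.mul hHR)).sub (hρ.mul hD)
  -- Step A: expand the matrix divergence
  have hA : divMat3 (fun x' => fun i j' =>
        dHdg H (p x', ρ x', grad3 ρ x') i * grad3 ρ x' j'
        + ((∑ k, p x' k * dHdp H (p x', ρ x', grad3 ρ x') k)
            + ρ x' * dHdrho H (p x', ρ x', grad3 ρ x')
            - ρ x' * div3 (fun x'' => dHdg H (p x'', ρ x'', grad3 ρ x'')) x')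
          * (if i = j' then 1 else 0)) x j
      = (∑ i, (pd3 (fun x' => dHdg H (p x', ρ x', grad3 ρ x') i) i x * grad3 ρ x j
            + dHdg H (p x, ρ x, grad3 ρ x) i * pd3 (fun x' => grad3 ρ x' j) i x))
        + pd3 (fun x' =>
            (∑ k, p x' k * dHdp H (p x', ρ x', grad3 ρ x') k)
              + ρ x' * dHdrho H (p x', ρ x', grad3 ρ x')
              - ρ x' * div3 (fun x'' => dHdg H (p x'', ρ x'', grad3 ρ x'')) x') j x := by
    unfold divMat3
    have hterm : ∀ i : Fin 3,
        pd3 (fun x' =>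
          dHdg H (p x', ρ x', grad3 ρ x') i * grad3 ρ x' j
          + ((∑ k, p x' k * dHdp H (p x', ρ x', grad3 ρ x') k)
              + ρ x' * dHdrho H (p x', ρ x', grad3 ρ x')
              - ρ x' * div3 (fun x'' => dHdg H (p x'', ρ x'', grad3 ρ x'')) x')
            * (if i = j then 1 else 0)) i x
        = (pd3 (fun x' => dHdg H (p x', ρ x', grad3 ρ x') i) i x * grad3 ρ x j
            + dHdg H (p x, ρ x, grad3 ρ x) i * pd3 (fun x' => grad3 ρ x' j) i x)
          + pd3 (fun x' =>
              (∑ k, p x' k * dHdp H (p x', ρ x', grad3 ρ x') k)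
                + ρ x' * dHdrho H (p x', ρ x', grad3 ρ x')
                - ρ x' * div3 (fun x'' => dHdg H (p x'', ρ x'', grad3 ρ x'')) x') i x
            * (if i = j then 1 else 0) := by
      intro i
      rw [pd3_add (((hG i).differentiable (by simp) x).fun_mul ((hgr j).differentiable (by simp) x))
          ((hS.differentiable (by simp) x).mul_const _),
        pd3_mul ((hG i).differentiable (by simp) x) ((hgr j).differentiable (by simp) x),
        pd3_mul_const (hS.differentiable (by simp) x)]
    calc (∑ i, pd3 (fun x' =>
          dHdg H (p x', ρ x', grad3 ρ x') i * grad3 ρ x' j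
          + ((∑ k, p x' k * dHdp H (p x', ρ x', grad3 ρ x') k)
              + ρ x' * dHdrho H (p x', ρ x', grad3 ρ x')
              - ρ x' * div3 (fun x'' => dHdg H (p x'', ρ x'', grad3 ρ x'')) x')
            * (if i = j then 1 else 0)) i x)
        = ∑ i, ((pd3 (fun x' => dHdg H (p x', ρ x', grad3 ρ x') i) i x * grad3 ρ x j
            + dHdg H (p x, ρ x, grad3 ρ x) i * pd3 (fun x' => grad3 ρ x' j) i x)
          + pd3 (fun x' =>
              (∑ k, p x' k * dHdp H (p x', ρ x', grad3 ρ x') k)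
                + ρ x' * dHdrho H (p x', ρ x', grad3 ρ x')
                - ρ x' * div3 (fun x'' => dHdg H (p x'', ρ x'', grad3 ρ x'')) x') i x
            * (if i = j then 1 else 0)) := Finset.sum_congr rfl fun i _ => hterm i
      _ = _ := by
        rw [Finset.sum_add_distrib]
        congr 1
        simp [mul_ite, Finset.sum_ite_eq']
  -- Step B : expand pd3 of S
  have hsum : pd3 (fun x' => ∑ k, p x' k * dHdp H (p x', ρ x', grad3 ρ x') k) j x
      = ∑ a, pd3 (fun x' => p x' a * dHdp H (p x', ρ x', grad3 ρ x') a) j x :=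
    pd3_sum (f := fun a x' => p x' a * dHdp H (p x', ρ x', grad3 ρ x') a)
      (fun a _ => ((hPa a).differentiable (by simp) x).mul ((hHP a).differentiable (by simp) x)) j
  have hB : pd3 (fun x' =>
        (∑ k, p x' k * dHdp H (p x', ρ x', grad3 ρ x') k)
          + ρ x' * dHdrho H (p x', ρ x', grad3 ρ x')
          - ρ x' * div3 (fun x'' => dHdg H (p x'', ρ x'', grad3 ρ x'')) x') j x
      = (∑ a, (pd3 (fun x' => p x' a) j x * dHdp H (p x, ρ x, grad3 ρ x) a
            + p x a * pd3 (fun x' => dHdp H (p x', ρ x', grad3 ρ x') a) j x))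
        + (pd3 ρ j x * dHdrho H (p x, ρ x, grad3 ρ x)
            + ρ x * pd3 (fun x' => dHdrho H (p x', ρ x', grad3 ρ x')) j x)
        - (pd3 ρ j x * div3 (fun x'' => dHdg H (p x'', ρ x'', grad3 ρ x'')) x
            + ρ x * pd3 (fun x' => div3 (fun x'' => dHdg H (p x'', ρ x'', grad3 ρ x'')) x') j x) := by
    rw [pd3_sub ((ContDiff.sum fun k (_ : k ∈ Finset.univ) => (hPa k).mul (hHP k)).differentiable (by simp) x
          |>.fun_add ((hρ.mul hHR).differentiable (by simp) x))
        ((hρ.mul hD).differentiable (by simp) x),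
      pd3_add ((ContDiff.sum fun k (_ : k ∈ Finset.univ) => (hPa k).mul (hHP k)).differentiable (by simp) x)
        ((hρ.mul hHR).differentiable (by simp) x),
      pd3_mul (hρ.differentiable (by simp) x) (hHR.differentiable (by simp) x),
      pd3_mul (hρ.differentiable (by simp) x) (hD.differentiable (by simp) x),
      hsum]
    congr 1
    congr 1
    exact Finset.sum_congr rfl fun a _ =>
      pd3_mul ((hPa a).differentiable (by simp) x) ((hHP a).differentiable (by simp) x) j
  -- Step C
  have hC : pd3 (fun x' =>
        dHdrho H (p x', ρ x', grad3 ρ x')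
          - div3 (fun x'' => dHdg H (p x'', ρ x'', grad3 ρ x'')) x') j x
      = pd3 (fun x' => dHdrho H (p x', ρ x', grad3 ρ x')) j x
        - pd3 (fun x' => div3 (fun x'' => dHdg H (p x'', ρ x'', grad3 ρ x'')) x') j x :=
    pd3_sub (hHR.differentiable (by simp) x) (hD.differentiable (by simp) x) j
  -- Schwarz
  have hSch : ∀ i : Fin 3, pd3 (fun x' => grad3 ρ x' j) i x = pd3 (fun x' => grad3 ρ x' i) j x :=
    fun i => pd3_grad3_symm hρ x i j
  -- div3 at x
  have hDx : div3 (fun x'' => dHdg H (p x'', ρ x'', grad3 ρ x'')) x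
      = ∑ i, pd3 (fun x' => dHdg H (p x', ρ x', grad3 ρ x') i) i x := rfl
  have hgrj : grad3 ρ x j = pd3 ρ j x := rfl
  rw [chain_rule H hH p ρ hp hρ x j, hA, hB, hC]
  simp only [hSch, hDx, hgrj]
  -- pure algebra
  rw [Finset.sum_add_distrib, Finset.sum_add_distrib, ← Finset.sum_mul]
  have c1 : (∑ k, pd3 (fun x' => grad3 ρ x' k) j x * dHdg H (p x, ρ x, grad3 ρ x) k)
      = ∑ i, dHdg H (p x, ρ x, grad3 ρ x) i * pd3 (fun x' => grad3 ρ x' i) j x :=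
    Finset.sum_congr rfl fun k _ => mul_comm _ _
  have c2 : (∑ a, pd3 (fun x' => dHdp H (p x', ρ x', grad3 ρ x') a) j x * p x a)
      = ∑ a, p x a * pd3 (fun x' => dHdp H (p x', ρ x', grad3 ρ x') a) j x :=
    Finset.sum_congr rfl fun a _ => mul_comm _ _
  rw [c1, c2]
  ring
end
end

section
/- Let H : ℝ³ × ℝ × ℝ³ → ℝ be smooth, S : ℝ³×ℝ → ℝ smooth, and p̃ : ℝ³×ℝ×ℝ → ℝ³, ρ̃ : ℝ³×ℝ×ℝ → ℝ smooth and 2π-periodic in θ. Then at every (x,t,θ), with all derivatives of H evaluated at (p̃, ρ̃, ∇^Sρ̃): ∇^S( H(p̃, ρ̃, ∇^Sρ̃) ) = ( ∂H/∂ρ − ∇^S·(∂H/∂g) ) ∇^Sρ̃ + ∇^S·( (∂H/∂g) ⊗ ∇^Sρ̃ ) + (∇^S p̃)·(∂H/∂p). -/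
/-!
Statement 12: The WKB chain-rule identity
`∇^S(H(p̃,ρ̃,∇^Sρ̃)) = (∂H/∂ρ − ∇^S·(∂H/∂g)) ∇^Sρ̃ + ∇^S·((∂H/∂g) ⊗ ∇^Sρ̃)
   + (∇^S p̃)·(∂H/∂p)`.
-/

noncomputable section

/-- Spacetime `(x, t)`. -/
abbrev SpT : Type := V3 × ℝ

/-- The extended domain `(x, t, θ)`. -/
abbrev D3 : Type := V3 × ℝ × ℝ

/-- The WKB spatial derivative `∂_i^S f = ∂_i f + (∂_i S) ∂_θ f`. -/
def pdSx (S : SpT → ℝ) (i : Fin 3) (f : D3 → ℝ) (z : D3) : ℝ :=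
  fderiv ℝ f z (Pi.single i 1, 0, 0)
    + fderiv ℝ S (z.1, z.2.1) (Pi.single i 1, 0) * fderiv ℝ f z (0, 0, 1)

/-- The WKB gradient `∇^S f`. -/
def gradS (S : SpT → ℝ) (f : D3 → ℝ) (z : D3) : V3 := fun i => pdSx S i f z

/-- The WKB divergence `∇^S · w`. -/
def divS (S : SpT → ℝ) (w : D3 → V3) (z : D3) : ℝ :=
  ∑ i, pdSx S i (fun z' => w z' i) z

def cS (S : SpT → ℝ) (i : Fin 3) (z : D3) : ℝ :=
  fderiv ℝ S (z.1, z.2.1) (Pi.single i 1, 0)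

lemma vec_decomp (i : Fin 3) (c : ℝ) :
    ((Pi.single i 1, 0, c) : D3) = ((Pi.single i 1, 0, 0) : D3) + c • (((0:V3), (0:ℝ), (1:ℝ)) : D3) := by
  simp [Prod.ext_iff]

lemma pdSx_eq (S : SpT → ℝ) (i : Fin 3) (f : D3 → ℝ) (z : D3) :
    pdSx S i f z = fderiv ℝ f z (Pi.single i 1, 0, cS S i z) := by
  rw [vec_decomp, map_add, map_smul]
  simp [pdSx, cS, mul_comm]

def pi13 : D3 →L[ℝ] SpT :=
  (ContinuousLinearMap.fst ℝ V3 (ℝ×ℝ)).prod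
    ((ContinuousLinearMap.fst ℝ ℝ ℝ).comp (ContinuousLinearMap.snd ℝ V3 (ℝ×ℝ)))

example (z : D3) : pi13 z = (z.1, z.2.1) := rfl

lemma contDiff_cS {S : SpT → ℝ} (hS : ContDiff ℝ (⊤ : ℕ∞) S) (i : Fin 3) :
    ContDiff ℝ (⊤ : ℕ∞) (cS S i) :=
  ((hS.fderiv_right (by simp)).comp pi13.contDiff).clm_apply contDiff_const

lemma contDiff_fderiv_apply {f : D3 → ℝ} (hf : ContDiff ℝ (⊤ : ℕ∞) f) (v : D3) :
    ContDiff ℝ (⊤ : ℕ∞) (fun z => fderiv ℝ f z v) :=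
  (hf.fderiv_right (by simp)).clm_apply contDiff_const

lemma contDiff_pdSx {S : SpT → ℝ} {f : D3 → ℝ} (hS : ContDiff ℝ (⊤ : ℕ∞) S)
    (hf : ContDiff ℝ (⊤ : ℕ∞) f) (i : Fin 3) :
    ContDiff ℝ (⊤ : ℕ∞) (fun z => pdSx S i f z) := by
  unfold pdSx
  exact (contDiff_fderiv_apply hf _).add
    ((contDiff_cS hS i).mul (contDiff_fderiv_apply hf _))

lemma clm_expand (L : (V3 × ℝ × V3) →L[ℝ] ℝ) (u : V3) (v : ℝ) (w : V3) :
    L (u, v, w) = (∑ j, u j * L (Pi.single j 1, 0, 0)) + v * L (0, 1, 0)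
      + ∑ a, w a * L (0, 0, Pi.single a 1) := by
  have hu : (u, v, w) = (∑ j, u j • ((Pi.single j 1 : V3), (0:ℝ), (0:V3)))
      + v • ((0:V3), (1:ℝ), (0:V3))
      + ∑ a, w a • ((0:V3), (0:ℝ), (Pi.single a 1 : V3)) := by
    refine Prod.ext ?_ (Prod.ext ?_ ?_) <;>
      simp [Prod.fst_sum, Prod.snd_sum, Fin.sum_univ_three] <;>
      funext x <;> fin_cases x <;> simp [Pi.single]
  rw [hu, map_add, map_add, map_sum, map_sum, map_smul]
  simp only [map_smul, smul_eq_mul]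


variable {H : V3 × ℝ × V3 → ℝ} {S : SpT → ℝ} {pt : D3 → V3} {rt : D3 → ℝ}

lemma contDiff_gradS (hS : ContDiff ℝ (⊤ : ℕ∞) S) (hrt : ContDiff ℝ (⊤ : ℕ∞) rt) :
    ContDiff ℝ (⊤ : ℕ∞) (gradS S rt) :=
  contDiff_pi.mpr fun i => contDiff_pdSx hS hrt i

lemma fderiv_pi_apply {f : D3 → V3} (hf : DifferentiableAt ℝ f z) (w : D3) (j : Fin 3) :
    fderiv ℝ f z w j = fderiv ℝ (fun z' => f z' j) z w := by
  rw [fderiv_pi (fun j => (differentiableAt_pi.mp hf) j)]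
  rfl

lemma step1 (hH : ContDiff ℝ (⊤ : ℕ∞) H) (hS : ContDiff ℝ (⊤ : ℕ∞) S)
    (hpt : ContDiff ℝ (⊤ : ℕ∞) pt) (hrt : ContDiff ℝ (⊤ : ℕ∞) rt) (z : D3) (i : Fin 3) :
    pdSx S i (fun z' => H (pt z', rt z', gradS S rt z')) z
      = (∑ j, dHdp H (pt z, rt z, gradS S rt z) j * pdSx S i (fun z' => pt z' j) z)
        + dHdrho H (pt z, rt z, gradS S rt z) * pdSx S i rt z
        + ∑ a, dHdg H (pt z, rt z, gradS S rt z) a * pdSx S i (fun z' => pdSx S a rt z') z := by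
  have hG : ContDiff ℝ (⊤ : ℕ∞) (gradS S rt) := contDiff_gradS hS hrt
  set F : D3 → V3 × ℝ × V3 := fun z' => (pt z', rt z', gradS S rt z') with hF_def
  have hF : ContDiff ℝ (⊤ : ℕ∞) F := hpt.prodMk (hrt.prodMk hG)
  rw [pdSx_eq]
  set w : D3 := (Pi.single i 1, 0, cS S i z) with hw
  have hcomp : fderiv ℝ (fun z' => H (F z')) z = (fderiv ℝ H (F z)).comp (fderiv ℝ F z) :=
    fderiv_comp z ((hH.differentiable (by simp)) (F z)) ((hF.differentiable (by simp)) z)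
  rw [hcomp, ContinuousLinearMap.comp_apply]
  have hFz : fderiv ℝ F z w
      = (fderiv ℝ pt z w, fderiv ℝ rt z w, fderiv ℝ (gradS S rt) z w) := by
    rw [DifferentiableAt.fderiv_prodMk ((hpt.differentiable (by simp)) z)
      (((hrt.differentiable (by simp)) z).prodMk ((hG.differentiable (by simp)) z)),
      DifferentiableAt.fderiv_prodMk ((hrt.differentiable (by simp)) z) ((hG.differentiable (by simp)) z)]
    rfl
  rw [hFz, clm_expand]
  have h1 : ∀ j, fderiv ℝ pt z w j = pdSx S i (fun z' => pt z' j) z := fun j => by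
    rw [fderiv_pi_apply ((hpt.differentiable (by simp)) z)]; exact (pdSx_eq S i _ z).symm
  have h2 : fderiv ℝ rt z w = pdSx S i rt z := (pdSx_eq S i rt z).symm
  have h3 : ∀ a, fderiv ℝ (gradS S rt) z w a
      = pdSx S i (fun z' => pdSx S a rt z') z := fun a => by
    rw [fderiv_pi_apply ((hG.differentiable (by simp)) z)]; exact (pdSx_eq S i _ z).symm
  simp only [h1, h2, h3, hF_def, dHdp, dHdrho, dHdg, Fin.sum_univ_three]
  ring

lemma fderiv_fderiv_apply (hrt : ContDiff ℝ (⊤ : ℕ∞) rt) (z v0 : D3) :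
    fderiv ℝ (fun z' => fderiv ℝ rt z' v0) z = (fderiv ℝ (fderiv ℝ rt) z).flip v0 := by
  rw [fderiv_clm_apply (((hrt.fderiv_right (m := 1) (by norm_cast)).differentiable one_ne_zero) z)
    (differentiableAt_const v0)]
  simp

lemma fderiv_cS_apply (hS : ContDiff ℝ (⊤ : ℕ∞) S) (i : Fin 3) (z v : D3) :
    fderiv ℝ (cS S i) z v
      = fderiv ℝ (fderiv ℝ S) (z.1, z.2.1) (v.1, v.2.1) (Pi.single i 1, 0) := by
  have hcomp : cS S i = (fun y => fderiv ℝ S y ((Pi.single i 1 : V3), (0:ℝ))) ∘ pi13 := rfl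
  have h1 : fderiv ℝ (cS S i) z
      = (fderiv ℝ (fun y => fderiv ℝ S y ((Pi.single i 1 : V3), (0:ℝ))) (pi13 z)).comp pi13 := by
    rw [hcomp, fderiv_comp z (((hS.fderiv_right (m := 1) (by norm_cast)).clm_apply
      contDiff_const).differentiable one_ne_zero _) pi13.differentiableAt, pi13.fderiv]
  have h2 : fderiv ℝ (fun y => fderiv ℝ S y ((Pi.single i 1 : V3), (0:ℝ))) (pi13 z)
      = (fderiv ℝ (fderiv ℝ S) (pi13 z)).flip ((Pi.single i 1 : V3), (0:ℝ)) := by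
    rw [fderiv_clm_apply (((hS.fderiv_right (m := 1) (by norm_cast)).differentiable one_ne_zero) _)
      (differentiableAt_const _)]
    simp
  rw [h1, h2]
  rfl

lemma fderiv_pdSx_apply (hS : ContDiff ℝ (⊤ : ℕ∞) S) (hrt : ContDiff ℝ (⊤ : ℕ∞) rt) (i : Fin 3) (z v : D3) :
    fderiv ℝ (fun z' => pdSx S i rt z') z v
      = fderiv ℝ (fderiv ℝ rt) z v (Pi.single i 1, 0, 0)
        + fderiv ℝ (fderiv ℝ S) (z.1, z.2.1) (v.1, v.2.1) (Pi.single i 1, 0)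
            * fderiv ℝ rt z ((0:V3), (0:ℝ), (1:ℝ))
        + cS S i z * fderiv ℝ (fderiv ℝ rt) z v ((0:V3), (0:ℝ), (1:ℝ)) := by
  have hd1 : DifferentiableAt ℝ
      (fun z' => fderiv ℝ rt z' ((Pi.single i 1 : V3), (0:ℝ), (0:ℝ))) z :=
    ((contDiff_fderiv_apply hrt _).differentiable (by simp)) z
  have hd2 : DifferentiableAt ℝ (fun z' => fderiv ℝ rt z' ((0:V3), (0:ℝ), (1:ℝ))) z :=
    ((contDiff_fderiv_apply hrt _).differentiable (by simp)) z
  have hdc : DifferentiableAt ℝ (cS S i) z := ((contDiff_cS hS i).differentiable (by simp)) z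
  have hsplit : (fun z' => pdSx S i rt z')
      = fun z' => fderiv ℝ rt z' ((Pi.single i 1 : V3), (0:ℝ), (0:ℝ))
          + cS S i z' * fderiv ℝ rt z' ((0:V3), (0:ℝ), (1:ℝ)) := rfl
  rw [hsplit, fderiv_fun_add hd1 (hdc.fun_mul hd2), ContinuousLinearMap.add_apply,
    fderiv_fun_mul hdc hd2, fderiv_fderiv_apply hrt z ((Pi.single i 1 : V3), (0:ℝ), (0:ℝ)),
    fderiv_fderiv_apply hrt z ((0:V3), (0:ℝ), (1:ℝ)), ContinuousLinearMap.add_apply]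
  simp only [ContinuousLinearMap.coe_smul', Pi.smul_apply, smul_eq_mul,
    ContinuousLinearMap.flip_apply, fderiv_cS_apply hS]
  ring

lemma pdSx_comm (hS : ContDiff ℝ (⊤ : ℕ∞) S) (hrt : ContDiff ℝ (⊤ : ℕ∞) rt) (z : D3) (a i : Fin 3) :
    pdSx S a (fun z' => pdSx S i rt z') z = pdSx S i (fun z' => pdSx S a rt z') z := by
  have Asymm : ∀ v w : D3, fderiv ℝ (fderiv ℝ rt) z v w = fderiv ℝ (fderiv ℝ rt) z w v :=
    second_derivative_symmetric (fun y => ((hrt.differentiable (by simp)) y).hasFDerivAt)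
      (((hrt.fderiv_right (m := 1) (by norm_cast)).differentiable one_ne_zero z).hasFDerivAt)
  have Bsymm : ∀ v w : SpT, fderiv ℝ (fderiv ℝ S) (z.1, z.2.1) v w
      = fderiv ℝ (fderiv ℝ S) (z.1, z.2.1) w v :=
    second_derivative_symmetric (fun y => ((hS.differentiable (by simp)) y).hasFDerivAt)
      (((hS.fderiv_right (m := 1) (by norm_cast)).differentiable one_ne_zero (z.1, z.2.1)).hasFDerivAt)
  rw [pdSx_eq, pdSx_eq, fderiv_pdSx_apply hS hrt, fderiv_pdSx_apply hS hrt,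
    vec_decomp a (cS S a z), vec_decomp i (cS S i z), map_add, map_smul, map_add, map_smul]
  simp only [ContinuousLinearMap.add_apply, ContinuousLinearMap.coe_smul', Pi.smul_apply,
    smul_eq_mul]
  simp only [Prod.fst_add, Prod.snd_add, Prod.smul_fst, Prod.smul_snd, smul_zero, add_zero]
  rw [Asymm ((Pi.single i 1 : V3), (0:ℝ), (0:ℝ)) ((Pi.single a 1 : V3), (0:ℝ), (0:ℝ)),
    Asymm ((Pi.single i 1 : V3), (0:ℝ), (0:ℝ)) ((0:V3), (0:ℝ), (1:ℝ)),
    Asymm ((0:V3), (0:ℝ), (1:ℝ)) ((Pi.single a 1 : V3), (0:ℝ), (0:ℝ)),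
    Bsymm ((Pi.single i 1 : V3), (0:ℝ)) ((Pi.single a 1 : V3), (0:ℝ))]
  ring

lemma pdSx_mul {S : SpT → ℝ} {f g : D3 → ℝ} {z : D3}
    (hf : DifferentiableAt ℝ f z) (hg : DifferentiableAt ℝ g z) (a : Fin 3) :
    pdSx S a (fun z' => f z' * g z') z = pdSx S a f z * g z + f z * pdSx S a g z := by
  rw [pdSx_eq, pdSx_eq, pdSx_eq, fderiv_fun_mul hf hg]
  simp only [ContinuousLinearMap.add_apply, ContinuousLinearMap.coe_smul', Pi.smul_apply,
    smul_eq_mul]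
  ring

theorem wkb_gradient_identity (H : V3 × ℝ × V3 → ℝ) (hH : ContDiff ℝ (⊤ : ℕ∞) H)
    (S : SpT → ℝ) (hS : ContDiff ℝ (⊤ : ℕ∞) S)
    (pt : D3 → V3) (rt : D3 → ℝ)
    (hpt : ContDiff ℝ (⊤ : ℕ∞) pt) (hrt : ContDiff ℝ (⊤ : ℕ∞) rt)
    (hpper : ∀ z : D3, pt (z.1, z.2.1, z.2.2 + 2 * Real.pi) = pt z)
    (hrper : ∀ z : D3, rt (z.1, z.2.1, z.2.2 + 2 * Real.pi) = rt z) :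
    ∀ (z : D3) (i : Fin 3),
      pdSx S i (fun z' => H (pt z', rt z', gradS S rt z')) z =
        (dHdrho H (pt z, rt z, gradS S rt z)
            - divS S (fun z' => dHdg H (pt z', rt z', gradS S rt z')) z)
          * gradS S rt z i
        + (∑ a, pdSx S a (fun z' =>
            dHdg H (pt z', rt z', gradS S rt z') a * pdSx S i rt z') z)
        + (∑ j, pdSx S i (fun z' => pt z' j) z
            * dHdp H (pt z, rt z, gradS S rt z) j) := by
  intro z i
  have hG : ContDiff ℝ (⊤ : ℕ∞) (gradS S rt) := contDiff_gradS hS hrt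
  have hF : ContDiff ℝ (⊤ : ℕ∞) (fun z' => (pt z', rt z', gradS S rt z')) :=
    hpt.prodMk (hrt.prodMk hG)
  have hdga : ∀ a, ContDiff ℝ (⊤ : ℕ∞) (fun z' => dHdg H (pt z', rt z', gradS S rt z') a) := by
    intro a
    unfold dHdg
    exact ((hH.fderiv_right (by simp)).comp hF).clm_apply contDiff_const
  have hstep3 : ∀ a,
      pdSx S a (fun z' => dHdg H (pt z', rt z', gradS S rt z') a * pdSx S i rt z') z
        = pdSx S a (fun z' => dHdg H (pt z', rt z', gradS S rt z') a) z * pdSx S i rt z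
          + dHdg H (pt z, rt z, gradS S rt z) a
              * pdSx S i (fun z' => pdSx S a rt z') z := by
    intro a
    rw [pdSx_mul (((hdga a).differentiable (by simp)) z)
      (((contDiff_pdSx hS hrt i).differentiable (by simp)) z), pdSx_comm hS hrt z a i]
  have hdiv : divS S (fun z' => dHdg H (pt z', rt z', gradS S rt z')) z
      = ∑ a, pdSx S a (fun z' => dHdg H (pt z', rt z', gradS S rt z') a) z := rfl
  have hgi : gradS S rt z i = pdSx S i rt z := rfl
  rw [step1 hH hS hpt hrt z i]
  simp only [hstep3, hdiv, hgi, Fin.sum_univ_three]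
  ring
end
end
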